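/- Every probabilistic fixed group ballot rule on 𝒟^n is a random group min-max rule, i.e., can be written as a convex combination of group min-max rules. -/

import Mathlib

open Finset

/-! ### Preferences and the single-peaked domain -/

/-- A strict preference over the `m+1` alternatives `Fin (m+1)`:
`P k` is the alternative ranked `k`-th (`0`-indexed, so `P 0` is the top). -/
abbrev Pref (m : ℕ) := Equiv.Perm (Fin (m + 1))

/-- Single-peakedness w.r.t. the prior linear order on `Fin (m+1)`. -/
def SinglePeaked {m : ℕ} (P : Pref m) : Prop :=
  ∀ a b : Fin (m + 1), ((P 0 ≤ a ∧ a < b) ∨ (b < a ∧ a ≤ P 0)) → P.symm a < P.symm b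

/-- The single-peaked domain `𝒟`. -/
abbrev SPPref (m : ℕ) := {P : Pref m // SinglePeaked P}

/-- Top-ranked alternative of a preference. -/
def peak {m : ℕ} (P : SPPref m) : Fin (m + 1) := P.val 0

/-- The upper contour set `U(a, P)` of the alternative `a` at `P`. -/
def UC {m : ℕ} (P : SPPref m) (a : Fin (m + 1)) : Finset (Fin (m + 1)) :=
  univ.filter fun b => P.val.symm b ≤ P.val.symm a

/-- The set of the `k` top-ranked alternatives of `P`, i.e. `U(P(k), P)`. -/
def topSet {m : ℕ} (P : SPPref m) (k : ℕ) : Finset (Fin (m + 1)) :=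
  univ.filter fun b => (P.val.symm b : ℕ) < k

/-- A profile of single-peaked preferences, one for each of the `n` agents. -/
abbrev Profile (m n : ℕ) := Fin n → SPPref m

/-- A random social choice function, recorded via its probabilities. -/
abbrev RSCF (m n : ℕ) := Profile m n → Fin (m + 1) → ℝ

def IsProb {m : ℕ} (p : Fin (m + 1) → ℝ) : Prop :=
  (∀ a, 0 ≤ p a) ∧ ∑ a, p a = 1

/-- `φ` genuinely maps into `Δ(A)`. -/
def IsRSCF {m n : ℕ} (φ : RSCF m n) : Prop := ∀ P, IsProb (φ P)

/-- `φ_B(P)`, the probability of the set `B` at profile `P`. -/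
def probOn {m n : ℕ} (φ : RSCF m n) (P : Profile m n) (B : Finset (Fin (m + 1))) : ℝ :=
  ∑ b ∈ B, φ P b

def Unanimous {m n : ℕ} (φ : RSCF m n) : Prop :=
  ∀ (P : Profile m n) (a : Fin (m + 1)), (∀ i, peak (P i) = a) → φ P a = 1

def StrategyProof {m n : ℕ} (φ : RSCF m n) : Prop :=
  ∀ (i : Fin n) (P : Profile m n) (P' : SPPref m) (a : Fin (m + 1)),
    probOn φ (Function.update P i P') (UC (P i) a) ≤ probOn φ P (UC (P i) a)

def Anonymous {m n : ℕ} (φ : RSCF m n) : Prop :=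
  ∀ (σ : Equiv.Perm (Fin n)) (P : Profile m n), φ P = φ fun i => P (σ i)

/-! ### Deterministic social choice functions -/

def DUnanimous {m n : ℕ} (f : Profile m n → Fin (m + 1)) : Prop :=
  ∀ (P : Profile m n) (a : Fin (m + 1)), (∀ i, peak (P i) = a) → f P = a

def DStrategyProof {m n : ℕ} (f : Profile m n → Fin (m + 1)) : Prop :=
  ∀ (i : Fin n) (P : Profile m n) (P' : SPPref m) (a : Fin (m + 1)),
    f (Function.update P i P') ∈ UC (P i) a → f P ∈ UC (P i) a

/-! ### Probabilistic fixed ballot rules -/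

def IsPFBRWith {m n : ℕ} (β : Finset (Fin n) → Fin (m + 1) → ℝ) (φ : RSCF m n) : Prop :=
  (∀ S, IsProb (β S)) ∧
  β ∅ (Fin.last m) = 1 ∧
  β univ 0 = 1 ∧
  (∀ S T : Finset (Fin n), S ⊆ T → ∀ t : Fin (m + 1),
    ∑ b ∈ Iic t, β S b ≤ ∑ b ∈ Iic t, β T b) ∧
  ∀ (P : Profile m n) (t : Fin (m + 1)),
    φ P t = (∑ b ∈ Iic t, β (univ.filter fun i => peak (P i) ≤ t) b)
          - ∑ b ∈ Iio t, β (univ.filter fun i => peak (P i) < t) b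

def IsPFBR {m n : ℕ} (φ : RSCF m n) : Prop := ∃ β, IsPFBRWith β φ

/-! ### Min-max rules -/

def minmaxOutcome {m n : ℕ} (β : Finset (Fin n) → Fin (m + 1)) (P : Profile m n) :
    Fin (m + 1) :=
  (univ : Finset (Finset (Fin n))).inf' univ_nonempty fun S =>
    (insert (β S) (S.image fun i => peak (P i))).max' (insert_nonempty _ _)

def MinMaxParams {m n : ℕ} (β : Finset (Fin n) → Fin (m + 1)) : Prop :=
  β ∅ = Fin.last m ∧ β univ = 0 ∧ ∀ S T : Finset (Fin n), S ⊆ T → β T ≤ β S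

def IsMinMax {m n : ℕ} (f : Profile m n → Fin (m + 1)) : Prop :=
  ∃ β, MinMaxParams β ∧ ∀ P, f P = minmaxOutcome β P

/-- `φ` is the mixture of the deterministic rules `F w` with weights `lam w`. -/
def IsMixture {m n : ℕ} (φ : RSCF m n) (k : ℕ) (lam : Fin k → ℝ)
    (F : Fin k → Profile m n → Fin (m + 1)) : Prop :=
  (∀ w, 0 ≤ lam w) ∧ (∑ w, lam w = 1) ∧
  ∀ P a, φ P a = ∑ w, lam w * (if F w P = a then (1 : ℝ) else 0)

/-! ### Groups -/

/-- Size of the group `q` of the partition described by `grp`. -/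
def gsize {n g : ℕ} (grp : Fin n → Fin g) (q : Fin g) : ℕ :=
  (univ.filter fun i => grp i = q).card

lemma count_le_n {n : ℕ} (p : Fin n → Prop) [DecidablePred p] :
    (univ.filter p).card ≤ n := by
  simpa using card_filter_le (univ : Finset (Fin n)) p

/-- Membership in `Γ`: each component is at most the size of the corresponding group. -/
def GammaValid {n g : ℕ} (grp : Fin n → Fin g) (γ : Fin g → Fin (n + 1)) : Prop :=
  ∀ q, (γ q : ℕ) ≤ gsize grp q

/-- The maximal element `γ̄` of `Γ`. -/
def gammaTop {n g : ℕ} (grp : Fin n → Fin g) : Fin g → Fin (n + 1) :=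
  fun q => ⟨gsize grp q, Nat.lt_succ_of_le (count_le_n _)⟩

/-- `α(t; P)`: componentwise, the number of agents of each group whose peak is `≤ t`. -/
def alphaVec {m n g : ℕ} (grp : Fin n → Fin g) (P : Profile m n) (t : Fin (m + 1)) :
    Fin g → Fin (n + 1) := fun q =>
  ⟨(univ.filter fun i => grp i = q ∧ peak (P i) ≤ t).card, Nat.lt_succ_of_le (count_le_n _)⟩

/-- `α(t-1; P)` in zero-indexed form: agents of each group whose peak is `< t`. -/
def alphaLtVec {m n g : ℕ} (grp : Fin n → Fin g) (P : Profile m n) (t : Fin (m + 1)) :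
    Fin g → Fin (n + 1) := fun q =>
  ⟨(univ.filter fun i => grp i = q ∧ peak (P i) < t).card, Nat.lt_succ_of_le (count_le_n _)⟩

def GroupAnon {m n g : ℕ} (grp : Fin n → Fin g) (φ : RSCF m n) : Prop :=
  ∀ π : Equiv.Perm (Fin n), (∀ i, grp (π i) = grp i) →
    ∀ P : Profile m n, φ P = φ fun i => P (π i)

def DGroupAnon {m n g : ℕ} (grp : Fin n → Fin g) (f : Profile m n → Fin (m + 1)) : Prop :=
  ∀ π : Equiv.Perm (Fin n), (∀ i, grp (π i) = grp i) →
    ∀ P : Profile m n, f P = f fun i => P (π i)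

/-! ### Probabilistic fixed group ballot rules -/

def IsPFGBRWith {m n g : ℕ} (grp : Fin n → Fin g)
    (β : (Fin g → Fin (n + 1)) → Fin (m + 1) → ℝ) (φ : RSCF m n) : Prop :=
  (∀ γ, GammaValid grp γ → IsProb (β γ)) ∧
  β (fun _ => 0) (Fin.last m) = 1 ∧
  β (gammaTop grp) 0 = 1 ∧
  (∀ γ γ', GammaValid grp γ → GammaValid grp γ' → (∀ q, γ' q ≤ γ q) →
    ∀ t : Fin (m + 1), ∑ b ∈ Iic t, β γ' b ≤ ∑ b ∈ Iic t, β γ b) ∧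
  ∀ (P : Profile m n) (t : Fin (m + 1)),
    φ P t = (∑ b ∈ Iic t, β (alphaVec grp P t) b) - ∑ b ∈ Iio t, β (alphaLtVec grp P t) b

def IsPFGBR {m n g : ℕ} (grp : Fin n → Fin g) (φ : RSCF m n) : Prop :=
  ∃ β, IsPFGBRWith grp β φ

/-! ### Group min-max rules -/

/-- `τ_t(P_{N_q})` : the `t`-th smallest peak of group `q` (`τ_0 = a_1`). -/
def tau {m n g : ℕ} (grp : Fin n → Fin g) (P : Profile m n) (q : Fin g) (t : ℕ) :
    Fin (m + 1) :=
  ((0 : Fin (m + 1)) ::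
    Multiset.sort
      ((univ.filter fun i => grp i = q).val.map fun i => peak (P i)) (· ≤ ·)).getD t 0

/-- `Γ` as a finite set. -/
def gammaSet {n g : ℕ} (grp : Fin n → Fin g) : Finset (Fin g → Fin (n + 1)) :=
  univ.filter fun γ => ∀ q, (γ q : ℕ) ≤ gsize grp q

lemma gammaSet_nonempty {n g : ℕ} (grp : Fin n → Fin g) : (gammaSet grp).Nonempty :=
  ⟨fun _ => 0, by simp [gammaSet]⟩

/-- Outcome of the group min-max rule with parameters `β`. -/
def gmmrOutcome {m n g : ℕ} (grp : Fin n → Fin g)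
    (β : (Fin g → Fin (n + 1)) → Fin (m + 1)) (P : Profile m n) : Fin (m + 1) :=
  (gammaSet grp).inf' (gammaSet_nonempty grp) fun γ =>
    (insert (β γ) (univ.image fun q => tau grp P q ((γ q : ℕ)))).max' (insert_nonempty _ _)

def GMMRParams {m n g : ℕ} (grp : Fin n → Fin g)
    (β : (Fin g → Fin (n + 1)) → Fin (m + 1)) : Prop :=
  β (fun _ => 0) = Fin.last m ∧ β (gammaTop grp) = 0 ∧
  ∀ γ γ', GammaValid grp γ → GammaValid grp γ' → (∀ q, γ' q ≤ γ q) → β γ ≤ β γ'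

def IsGMMR {m n g : ℕ} (grp : Fin n → Fin g) (f : Profile m n → Fin (m + 1)) : Prop :=
  ∃ β, GMMRParams grp β ∧ ∀ P, f P = gmmrOutcome grp β P

/-! ### Representation scenarios and group fairness -/

/-- A preference profile of the members of group `q`. -/
abbrev GrpProfile (m : ℕ) {n g : ℕ} (grp : Fin n → Fin g) (q : Fin g) :=
  {i : Fin n // grp i = q} → SPPref m

/-- Restriction of a profile to the members of group `q`. -/
def restrict {m n g : ℕ} (grp : Fin n → Fin g) (P : Profile m n) (q : Fin g) :
    GrpProfile m grp q := fun i => P i.val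

/-- A representation scenario: a representative function for each group. -/
abbrev RepScenario (m : ℕ) {n g : ℕ} (grp : Fin n → Fin g) :=
  (q : Fin g) → GrpProfile m grp q → Finset (Fin (m + 1))

def TopRanged {m n g : ℕ} (grp : Fin n → Fin g) (ψ : RepScenario m grp) (q : Fin g) : Prop :=
  ∀ Pq : GrpProfile m grp q, ∃ a ∈ ψ q Pq, ∃ i j : {i : Fin n // grp i = q},
    peak (Pq i) ≤ a ∧ a ≤ peak (Pq j)

/-- `ψ` is compliant with `κ`: each `ψ q` is top-ranged and always selects an
interval of exactly `κ q` consecutive alternatives. -/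
def Compliant {m n g : ℕ} (grp : Fin n → Fin g) (κ : Fin g → ℕ)
    (ψ : RepScenario m grp) : Prop :=
  ∀ q, TopRanged grp ψ q ∧ ∀ Pq, ∃ x y : Fin (m + 1),
    x ≤ y ∧ (y : ℕ) + 1 = (x : ℕ) + κ q ∧ ψ q Pq = Finset.Icc x y

def GroupWeakFair {m n g : ℕ} (grp : Fin n → Fin g) (ψ : RepScenario m grp)
    (η : Fin g → ℝ) (φ : RSCF m n) : Prop :=
  ∀ (P : Profile m n) (q : Fin g), η q ≤ probOn φ P (ψ q (restrict grp P q))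

def GroupStrongFair {m n g : ℕ} (grp : Fin n → Fin g) (ψ : RepScenario m grp)
    (η : Fin g → ℝ) (φ : RSCF m n) : Prop :=
  ∀ (P : Profile m n) (q : Fin g), ∃ a ∈ ψ q (restrict grp P q), η q ≤ φ P a

/-- `a` is feasible at `(z₁, z₂; ψ q)`. -/
def FeasibleAt {m n g : ℕ} (grp : Fin n → Fin g) (ψ : RepScenario m grp) (q : Fin g)
    (a : Fin (m + 1)) (z₁ z₂ : ℕ) : Prop :=
  ∃ (Pq : GrpProfile m grp q) (c : Fin (m + 1)),
    a ∈ ψ q Pq ∧ (∀ b ∈ ψ q Pq, a ≤ b) ∧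
    c ∈ ψ q Pq ∧ (∀ b ∈ ψ q Pq, b ≤ c) ∧
    (univ.filter fun i : {i : Fin n // grp i = q} => peak (Pq i) < a).card = z₁ ∧
    (univ.filter fun i : {i : Fin n // grp i = q} => c < peak (Pq i)).card = gsize grp q - z₂

/-- The set `{a_x, …, a_{x+k-1}}` is feasible at `(z 0, …, z k; ψ q)`. -/
def SetFeasibleAt {m n g : ℕ} (grp : Fin n → Fin g) (ψ : RepScenario m grp) (q : Fin g)
    (x : Fin (m + 1)) (k : ℕ) (z : Fin (k + 1) → ℕ) : Prop :=
  ∃ Pq : GrpProfile m grp q,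
    x ∈ ψ q Pq ∧ (∀ b ∈ ψ q Pq, x ≤ b) ∧
    (univ.filter fun i : {i : Fin n // grp i = q} => peak (Pq i) < x).card = z 0 ∧
    ∀ j : Fin k, (univ.filter fun i : {i : Fin n // grp i = q} =>
      (peak (Pq i) : ℕ) ≤ (x : ℕ) + (j : ℕ)).card = z j.succ

/-! ### Individual fairness -/

def IndWeakFair {m n : ℕ} (κ : Fin n → ℕ) (η : Fin n → ℝ) (φ : RSCF m n) : Prop :=
  ∀ (P : Profile m n) (i : Fin n), η i ≤ probOn φ P (topSet (P i) (κ i))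

def IndStrongFair {m n : ℕ} (κ : Fin n → ℕ) (η : Fin n → ℝ) (φ : RSCF m n) : Prop :=
  ∀ (P : Profile m n) (i : Fin n), ∃ a ∈ topSet (P i) (κ i), η i ≤ φ P a

/-! ### Median rules -/

/-- The median of the `n` peaks and the `n+1` parameters `β 0, …, β n`. -/
def medianOutcome {m n : ℕ} (β : Fin (n + 1) → Fin (m + 1)) (P : Profile m n) :
    Fin (m + 1) :=
  (Multiset.sort
    ((univ.val.map fun i : Fin n => peak (P i)) +
      (univ.val.map fun j : Fin (n + 1) => β j)) (· ≤ ·)).getD n 0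

def MedianParams {m n : ℕ} (β : Fin (n + 1) → Fin (m + 1)) : Prop :=
  β 0 = 0 ∧ β (Fin.last n) = Fin.last m ∧ Monotone β

/-!
Cut every ballot at a level `x ∈ (0, 1]`: let `β^x_γ` be the least `t` with `β_γ([a₁, t]) ≥ x`.
These are admissible group min-max parameters, and since a group min-max outcome lies weakly
below `t` exactly when the parameter at `α(t; P)` does, the rule with parameters `β^x` picks
at `P` the least `t` with `x ≤ φ_{[a₁, t]}(P)`. For `x` uniform on `(0, 1]` it therefore picks
`t` with probability `φ_{[a₁, t]}(P) - φ_{[a₁, t)}(P) = φ_t(P)`. Only the finitely many values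
of these cumulative probabilities matter, so `x` may range over them, each weighted by its gap
to the preceding one.
-/

theorem List.Pairwise.getD_le_iff_lt_countP {α : Type*} [LinearOrder α] {l : List α}
    (hl : l.Pairwise (· ≤ ·)) {t : ℕ} (ht : t < l.length) (d s : α) :
    l.getD t d ≤ s ↔ t < l.countP (· ≤ s) := by
  induction l generalizing t with
  | nil => simp at ht
  | cons a l ih =>
    rw [List.pairwise_cons] at hl
    by_cases has : a ≤ s
    · cases t with
      | zero => simp [has]
      | succ t =>
        rw [List.getD_cons_succ, ih hl.2 (Nat.succ_lt_succ_iff.1 ht)]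
        simp [has]
    · have hnone : l.countP (· ≤ s) = 0 :=
        List.countP_eq_zero.2 fun x hx hxs => has ((hl.1 x hx).trans (by simpa using hxs))
      have hgt : ∀ x ∈ a :: l, ¬x ≤ s := by
        rintro x (_ | ⟨_, hx⟩) hxs
        exacts [has hxs, has ((hl.1 x hx).trans hxs)]
      rw [List.countP_cons, hnone]
      simp only [has, decide_false, zero_add, Bool.false_eq_true, if_false, Nat.not_lt_zero,
        iff_false]
      exact hgt _ (List.getD_eq_getElem _ d ht ▸ List.getElem_mem ht)

theorem tau_le_iff {m n g : ℕ} (grp : Fin n → Fin g) (P : Profile m n) (q : Fin g) {t : ℕ}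
    (ht : t ≤ gsize grp q) (s : Fin (m + 1)) :
    tau grp P q t ≤ s ↔ t ≤ alphaVec grp P s q := by
  set M := (univ.filter fun i => grp i = q).val.map fun i => peak (P i)
  have hsorted : ((0 : Fin (m + 1)) :: M.sort (· ≤ ·)).Pairwise (· ≤ ·) :=
    List.pairwise_cons.2 ⟨fun x _ => Fin.zero_le x, M.pairwise_sort _⟩
  have hlen : t < ((0 : Fin (m + 1)) :: M.sort (· ≤ ·)).length := by
    rw [List.length_cons, Multiset.length_sort, Multiset.card_map]
    exact Nat.lt_succ_of_le ht
  have hcount : (M.sort (· ≤ ·)).countP (· ≤ s) = alphaVec grp P s q := by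
    rw [← Multiset.coe_countP, Multiset.sort_eq, Multiset.countP_map]
    change ((univ.filter fun i => grp i = q).filter fun i => peak (P i) ≤ s).card = _
    rw [filter_filter]
    rfl
  unfold tau
  rw [hsorted.getD_le_iff_lt_countP hlen, List.countP_cons, hcount]
  simp

theorem alphaVec_valid {m n g : ℕ} (grp : Fin n → Fin g) (P : Profile m n) (t : Fin (m + 1)) :
    GammaValid grp (alphaVec grp P t) := fun q =>
  card_le_card fun i (hi : i ∈ univ.filter fun i => grp i = q ∧ _) =>
    mem_filter.2 ⟨mem_univ i, (mem_filter.1 hi).2.1⟩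

theorem alphaLtVec_valid {m n g : ℕ} (grp : Fin n → Fin g) (P : Profile m n) (t : Fin (m + 1)) :
    GammaValid grp (alphaLtVec grp P t) := fun q =>
  card_le_card fun i (hi : i ∈ univ.filter fun i => grp i = q ∧ _) =>
    mem_filter.2 ⟨mem_univ i, (mem_filter.1 hi).2.1⟩

theorem alphaLtVec_succ {m n g : ℕ} (grp : Fin n → Fin g) (P : Profile m n) (s : Fin m) :
    alphaLtVec grp P s.succ = alphaVec grp P s.castSucc := by
  ext q
  simp [alphaLtVec, alphaVec, Fin.le_castSucc_iff]

theorem gmmrOutcome_le_iff {m n g : ℕ} (grp : Fin n → Fin g)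
    (b : (Fin g → Fin (n + 1)) → Fin (m + 1)) (P : Profile m n) (s : Fin (m + 1)) :
    gmmrOutcome grp b P ≤ s ↔
      ∃ γ, GammaValid grp γ ∧ b γ ≤ s ∧ ∀ q, γ q ≤ alphaVec grp P s q := by
  simp only [gmmrOutcome, inf'_le_iff, max'_le_iff, forall_mem_insert, forall_mem_image,
    mem_univ, true_implies, gammaSet, mem_filter, true_and]
  refine exists_congr fun γ => and_congr_right fun hγ => and_congr_right fun _ =>
    forall_congr' fun q => ?_
  rw [Fin.le_def]
  exact tau_le_iff grp P q (hγ q) s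

theorem gmmrOutcome_le_iff_of_antitone {m n g : ℕ} {grp : Fin n → Fin g}
    {b : (Fin g → Fin (n + 1)) → Fin (m + 1)}
    (hb : ∀ γ γ', GammaValid grp γ → GammaValid grp γ' → (∀ q, γ' q ≤ γ q) → b γ ≤ b γ')
    (P : Profile m n) (s : Fin (m + 1)) :
    gmmrOutcome grp b P ≤ s ↔ b (alphaVec grp P s) ≤ s := by
  rw [gmmrOutcome_le_iff]
  exact ⟨fun ⟨γ, hγ, hbγ, hle⟩ => (hb _ _ (alphaVec_valid grp P s) hγ hle).trans hbγ,
    fun h => ⟨_, alphaVec_valid grp P s, h, fun _ => le_rfl⟩⟩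

open Classical in
/-- The least `t` with `x ≤ c t`, or `⊤` if there is none. -/
noncomputable def quantile {α β : Type*} [Fintype α] [LinearOrder α] [OrderTop α] [LE β]
    (c : α → β) (x : β) : α :=
  (univ.filter fun t => x ≤ c t ∨ t = ⊤).min' ⟨⊤, by simp⟩

theorem quantile_le_iff {α β : Type*} [Fintype α] [LinearOrder α] [OrderTop α] [Preorder β]
    {c : α → β} (hc : Monotone c) {x : β} (hx : x ≤ c ⊤) {t : α} :
    quantile c x ≤ t ↔ x ≤ c t := by
  classical
  refine ⟨fun h => ?_, fun h => min'_le _ _ (by simp [h])⟩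
  have hmem := min'_mem (univ.filter fun t => x ≤ c t ∨ t = ⊤) ⟨⊤, by simp⟩
  rcases (mem_filter.1 hmem).2 with hq | hq
  · exact hq.trans (hc h)
  · exact hx.trans (hc (hq ▸ h))

def cumProb {m : ℕ} (p : Fin (m + 1) → ℝ) (t : Fin (m + 1)) : ℝ :=
  ∑ b ∈ Iic t, p b

theorem IsProb.sum_mem_Icc {m : ℕ} {p : Fin (m + 1) → ℝ} (hp : IsProb p)
    (s : Finset (Fin (m + 1))) : ∑ b ∈ s, p b ∈ Set.Icc 0 1 :=
  ⟨sum_nonneg fun b _ => hp.1 b,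
    hp.2 ▸ sum_le_sum_of_subset_of_nonneg (subset_univ s) fun b _ _ => hp.1 b⟩

theorem IsProb.monotone_cumProb {m : ℕ} {p : Fin (m + 1) → ℝ} (hp : IsProb p) :
    Monotone (cumProb p) := fun _ _ hst =>
  sum_le_sum_of_subset_of_nonneg (Iic_subset_Iic.2 hst) fun b _ _ => hp.1 b

theorem IsProb.cumProb_top {m : ℕ} {p : Fin (m + 1) → ℝ} (hp : IsProb p) : cumProb p ⊤ = 1 := by
  rw [cumProb, Iic_top, hp.2]

theorem IsProb.cumProb_add_le_one {m : ℕ} {p : Fin (m + 1) → ℝ} (hp : IsProb p)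
    {t : Fin (m + 1)} (ht : t < ⊤) : cumProb p t + p ⊤ ≤ 1 := by
  have hnot : ⊤ ∉ Iic t := by simpa using ht.ne
  rw [cumProb, add_comm, ← sum_insert hnot]
  exact (hp.sum_mem_Icc _).2

theorem IsProb.quantile_cumProb_le_iff {m : ℕ} {p : Fin (m + 1) → ℝ} (hp : IsProb p) {x : ℝ}
    (hx : x ≤ 1) {t : Fin (m + 1)} : quantile (cumProb p) x ≤ t ↔ x ≤ cumProb p t :=
  quantile_le_iff hp.monotone_cumProb (hp.cumProb_top.symm ▸ hx)

noncomputable def levelParams {m n g : ℕ} (β : (Fin g → Fin (n + 1)) → Fin (m + 1) → ℝ)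
    (x : ℝ) (γ : Fin g → Fin (n + 1)) : Fin (m + 1) :=
  quantile (cumProb (β γ)) x

section LevelParams

variable {m n g : ℕ} {grp : Fin n → Fin g} {β : (Fin g → Fin (n + 1)) → Fin (m + 1) → ℝ}

theorem levelParams_antitone (hprob : ∀ γ, GammaValid grp γ → IsProb (β γ))
    (hmono : ∀ γ γ', GammaValid grp γ → GammaValid grp γ' → (∀ q, γ' q ≤ γ q) →
      ∀ t : Fin (m + 1), ∑ b ∈ Iic t, β γ' b ≤ ∑ b ∈ Iic t, β γ b)
    {x : ℝ} (hx : x ≤ 1) (γ γ' : Fin g → Fin (n + 1)) (hγ : GammaValid grp γ)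
    (hγ' : GammaValid grp γ') (hle : ∀ q, γ' q ≤ γ q) :
    levelParams β x γ ≤ levelParams β x γ' := by
  rw [levelParams, (hprob γ hγ).quantile_cumProb_le_iff hx]
  exact ((hprob γ' hγ').quantile_cumProb_le_iff hx |>.1 le_rfl).trans (hmono γ γ' hγ hγ' hle _)

theorem gmmrParams_levelParams (hprob : ∀ γ, GammaValid grp γ → IsProb (β γ))
    (hbot : β (fun _ => 0) (Fin.last m) = 1) (htop : β (gammaTop grp) 0 = 1)
    (hmono : ∀ γ γ', GammaValid grp γ → GammaValid grp γ' → (∀ q, γ' q ≤ γ q) →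
      ∀ t : Fin (m + 1), ∑ b ∈ Iic t, β γ' b ≤ ∑ b ∈ Iic t, β γ b)
    {x : ℝ} (hx : x ∈ Set.Ioc 0 1) : GMMRParams grp (levelParams β x) := by
  refine ⟨?_, ?_, levelParams_antitone hprob hmono hx.2⟩
  · have hprob0 := hprob (fun _ => 0) fun _ => Nat.zero_le _
    by_contra hne
    have hlt : levelParams β x (fun _ => 0) < ⊤ := lt_top_iff_ne_top.2 hne
    have hreach := hprob0.quantile_cumProb_le_iff hx.2 |>.1 (le_refl (levelParams β x _))
    have hrest := hprob0.cumProb_add_le_one hlt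
    rw [← Fin.top_eq_last] at hbot
    linarith [hx.1]
  · have hreach : x ≤ cumProb (β (gammaTop grp)) 0 := by
      rw [cumProb, show Iic (0 : Fin (m + 1)) = {0} from Iic_bot, sum_singleton, htop]
      exact hx.2
    exact Fin.le_zero_iff.1 <| (hprob _ fun _ => le_rfl).quantile_cumProb_le_iff hx.2 |>.2 hreach

theorem gmmrOutcome_levelParams_le_iff (hprob : ∀ γ, GammaValid grp γ → IsProb (β γ))
    (hmono : ∀ γ γ', GammaValid grp γ → GammaValid grp γ' → (∀ q, γ' q ≤ γ q) →
      ∀ t : Fin (m + 1), ∑ b ∈ Iic t, β γ' b ≤ ∑ b ∈ Iic t, β γ b)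
    {x : ℝ} (hx : x ≤ 1) (P : Profile m n) (t : Fin (m + 1)) :
    gmmrOutcome grp (levelParams β x) P ≤ t ↔ x ≤ cumProb (β (alphaVec grp P t)) t := by
  rw [gmmrOutcome_le_iff_of_antitone (levelParams_antitone hprob hmono hx)]
  exact (hprob _ (alphaVec_valid grp P t)).quantile_cumProb_le_iff hx

theorem gmmrOutcome_levelParams_lt_iff (hprob : ∀ γ, GammaValid grp γ → IsProb (β γ))
    (hmono : ∀ γ γ', GammaValid grp γ → GammaValid grp γ' → (∀ q, γ' q ≤ γ q) →
      ∀ t : Fin (m + 1), ∑ b ∈ Iic t, β γ' b ≤ ∑ b ∈ Iic t, β γ b)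
    {x : ℝ} (hx : x ∈ Set.Ioc 0 1) (P : Profile m n) (t : Fin (m + 1)) :
    gmmrOutcome grp (levelParams β x) P < t ↔ x ≤ ∑ b ∈ Iio t, β (alphaLtVec grp P t) b := by
  induction t using Fin.cases with
  | zero =>
    rw [show Iio (0 : Fin (m + 1)) = ∅ from Iio_bot, sum_empty]
    simp [hx.1]
  | succ s =>
    have hIio : Iio s.succ = Iic s.castSucc := by ext; simp [Fin.le_castSucc_iff]
    rw [← Fin.le_castSucc_iff, gmmrOutcome_levelParams_le_iff hprob hmono hx.2, alphaLtVec_succ,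
      hIio, cumProb]

end LevelParams

theorem Fin.sum_ite_succ_le_sub {M : Type*} [AddCommGroup M] {k : ℕ} (v : Fin (k + 1) → M)
    (i : Fin (k + 1)) :
    ∑ j : Fin k, (if j.succ ≤ i then v j.succ - v j.castSucc else 0) = v i - v 0 := by
  induction i using Fin.cases with
  | zero => simp [Fin.succ_ne_zero]
  | succ a =>
    rw [← sum_filter]
    simp only [Fin.succ_le_succ_iff]
    rw [show univ.filter (· ≤ a) = Iic a by ext; simp]
    exact Fin.sum_Iic_sub a v

theorem exists_isMixture_of_levels {m n : ℕ} (φ : RSCF m n) (F : ℝ → Profile m n → Fin (m + 1))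
    (U L : Profile m n → Fin (m + 1) → ℝ)
    (hU : ∀ P t, U P t ∈ Set.Icc 0 1) (hL : ∀ P t, L P t ∈ Set.Icc 0 1)
    (hφ : ∀ P t, φ P t = U P t - L P t)
    (hle : ∀ x ∈ Set.Ioc (0 : ℝ) 1, ∀ P t, F x P ≤ t ↔ x ≤ U P t)
    (hlt : ∀ x ∈ Set.Ioc (0 : ℝ) 1, ∀ P t, F x P < t ↔ x ≤ L P t) :
    ∃ (k : ℕ) (lam xs : Fin k → ℝ), (∀ j, xs j ∈ Set.Ioc (0 : ℝ) 1) ∧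
      IsMixture φ k lam fun j => F (xs j) := by
  classical
  set V : Finset ℝ := insert 0 (insert 1
    ((univ : Finset (Profile m n × Fin (m + 1))).image (fun p => U p.1 p.2) ∪
      univ.image fun p : Profile m n × Fin (m + 1) => L p.1 p.2))
  have hV : ∀ x ∈ V, x ∈ Set.Icc (0 : ℝ) 1 := by
    simp only [V, mem_insert, mem_union, mem_image]
    rintro x (rfl | rfl | ⟨p, -, rfl⟩ | ⟨p, -, rfl⟩)
    exacts [⟨le_rfl, zero_le_one⟩, ⟨zero_le_one, le_rfl⟩, hU _ _, hL _ _]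
  obtain ⟨k, hk⟩ : ∃ k, V.card = k + 1 := Nat.exists_eq_add_one.2 (card_pos.2 ⟨0, by simp [V]⟩)
  set v := V.orderEmbOfFin hk
  have hv0 : v 0 = 0 := by
    rw [show (0 : Fin (k + 1)) = ⟨0, k.succ_pos⟩ from rfl, orderEmbOfFin_zero]
    exact le_antisymm (min'_le _ _ (by simp [V])) (hV _ (min'_mem _ _)).1
  have hxs : ∀ j : Fin k, v j.succ ∈ Set.Ioc (0 : ℝ) 1 := fun j =>
    ⟨hv0 ▸ v.strictMono (Fin.succ_pos j), (hV _ (orderEmbOfFin_mem V hk _)).2⟩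
  have hlayer : ∀ x ∈ V,
      ∑ j : Fin k, (v j.succ - v j.castSucc) * (if v j.succ ≤ x then 1 else 0) = x := by
    intro x hx
    obtain ⟨i, rfl⟩ : x ∈ Set.range v := by rwa [range_orderEmbOfFin]
    simp only [mul_ite, mul_one, mul_zero, v.le_iff_le]
    rw [Fin.sum_ite_succ_le_sub, hv0, sub_zero]
  refine ⟨k, fun j => v j.succ - v j.castSucc, fun j => v j.succ, hxs,
    fun j => sub_nonneg.2 (v.monotone (Fin.castSucc_le_succ j)), ?_, fun P t => ?_⟩
  · simpa [(hxs _).2] using hlayer 1 (by simp [V])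
  · have hsplit : ∀ j : Fin k, (if F (v j.succ) P = t then (1 : ℝ) else 0) =
        (if v j.succ ≤ U P t then 1 else 0) - (if v j.succ ≤ L P t then 1 else 0) := by
      intro j
      simp only [← hle _ (hxs j), ← hlt _ (hxs j)]
      rcases lt_trichotomy (F (v j.succ) P) t with h | h | h
      · simp [h, h.ne, h.le]
      · simp [h]
      · simp [h.ne', not_le.2 h, not_lt.2 h.le]
    simp_rw [hsplit, mul_sub, sum_sub_distrib]
    rw [hlayer _ (by simp [V]), hlayer _ (by simp [V]), hφ]

theorem PFGBR_isRandomGMMR_general {m n g : ℕ} (grp : Fin n → Fin g)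
    (φ : RSCF m n) (h : IsPFGBR grp φ) :
    ∃ (k : ℕ) (lam : Fin k → ℝ) (F : Fin k → Profile m n → Fin (m + 1)),
      IsMixture φ k lam F ∧ ∀ w, IsGMMR grp (F w) := by
  obtain ⟨β, hprob, hbot, htop, hmono, hφ⟩ := h
  obtain ⟨k, lam, xs, hxs, hmix⟩ := exists_isMixture_of_levels φ
    (fun x => gmmrOutcome grp (levelParams β x))
    (fun P t => cumProb (β (alphaVec grp P t)) t)
    (fun P t => ∑ b ∈ Iio t, β (alphaLtVec grp P t) b)
    (fun P t => (hprob _ (alphaVec_valid grp P t)).sum_mem_Icc _)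
    (fun P t => (hprob _ (alphaLtVec_valid grp P t)).sum_mem_Icc _) hφ
    (fun _ hx => gmmrOutcome_levelParams_le_iff hprob hmono hx.2)
    (fun _ hx => gmmrOutcome_levelParams_lt_iff hprob hmono hx)
  exact ⟨k, lam, _, hmix, fun j =>
    ⟨_, gmmrParams_levelParams hprob hbot htop hmono (hxs j), fun _ => rfl⟩⟩

/-- Every probabilistic fixed group ballot rule is a random
group min-max rule. -/
theorem PFGBR_isRandomGMMR {m n g : ℕ} (hn : 2 ≤ n)
    (grp : Fin n → Fin g) (hsurj : Function.Surjective grp)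
    (φ : RSCF m n) (h : IsPFGBR grp φ) :
    ∃ (k : ℕ) (lam : Fin k → ℝ) (F : Fin k → Profile m n → Fin (m + 1)),
      IsMixture φ k lam F ∧ ∀ w, IsGMMR grp (F w) :=
  PFGBR_isRandomGMMR_general grp φ h
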